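/- Convergence of the normalized variance (Hurst factor): for every real κ with |κ| < 1/2, the limit H(κ) := lim_{N→∞} m₂(N; κ/N)/N exists, and there exist δ > 0 and C > 0 such that |H(κ) − (1 + 2κ + (8/3)κ²)| ≤ C·|κ|³ for all 0 < |κ| < δ. -/

import Mathlib

/-!
Averaging the recurrence against `x²`, the drift terms only rescale the second moment:
`m₂(n+1; ε) = (1 + 4ε) m₂(n; ε) + 1`, because `P(n, ·; ε)` has total mass `1` and is supported in
`[-n, n]`. Hence `m₂(N; κ/N) · 4κ/N = (1 + 4κ/N)^N - 1`, so `m₂(N; κ/N)/N → (e^{4κ} - 1)/(4κ)`,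
and the Taylor bound for `exp` of order four gives `1 + 2κ + 8κ²/3` up to `O(κ³)`.
-/

open Filter

/-- The discrete stochastic process with memory: binomial transfer probabilities
with coupling `ε`. -/
noncomputable def P (ε : ℝ) : ℕ → ℤ → ℝ
  | 0, x => if x = 0 then 1 else 0
  | n + 1, x =>
      P ε n (x + 1) * (1 / 2 - ((x : ℝ) + 1) * ε) +
      P ε n (x - 1) * (1 / 2 + ((x : ℝ) - 1) * ε)

/-- The second moment with coupling `ε`: `m₂(n; ε) = Σ_{x ∈ ℤ} x² · P(n, x; ε)`. -/
noncomputable def m2 (ε : ℝ) (n : ℕ) : ℝ := ∑' x : ℤ, (x : ℝ) ^ 2 * P ε n x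

theorem P_eq_zero_of_lt_abs (ε : ℝ) {n : ℕ} {x : ℤ} (hx : (n : ℤ) < |x|) : P ε n x = 0 := by
  induction n generalizing x with
  | zero => simp_all [P]
  | succ n ih =>
    push_cast at hx
    have h₁ : (n : ℤ) < |x + 1| := by
      linarith [abs_sub_abs_le_abs_sub x (x + 1), show |x - (x + 1)| = 1 by simp]
    have h₂ : (n : ℤ) < |x - 1| := by
      linarith [abs_sub_abs_le_abs_sub x (x - 1), show |x - (x - 1)| = 1 by simp]
    simp [P, ih h₁, ih h₂]

theorem summable_mul_P (ε : ℝ) (n : ℕ) (c : ℤ → ℝ) : Summable fun x ↦ c x * P ε n x :=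
  summable_of_ne_finset_zero (s := Finset.Icc (-(n : ℤ)) n) fun x hx ↦ by
    rw [Finset.mem_Icc, ← abs_le, not_le] at hx
    rw [P_eq_zero_of_lt_abs ε hx, mul_zero]

theorem tsum_comp_add_one_add_comp_sub_one {α : Type*} [AddCommMonoid α] [TopologicalSpace α]
    [ContinuousAdd α] [T2Space α] {f g : ℤ → α} (hf : Summable f) (hg : Summable g) :
    ∑' x, (f (x + 1) + g (x - 1)) = ∑' x, (f x + g x) := by
  have hf' : Summable fun x ↦ f (x + 1) := (Equiv.addRight 1).summable_iff.mpr hf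
  have hg' : Summable fun x ↦ g (x - 1) := (Equiv.subRight 1).summable_iff.mpr hg
  rw [hf'.tsum_add hg', hf.tsum_add hg]
  exact congr_arg₂ (· + ·) ((Equiv.addRight 1).tsum_eq f) ((Equiv.subRight 1).tsum_eq g)

theorem tsum_mul_P_succ (ε : ℝ) (n : ℕ) (c : ℤ → ℝ) :
    ∑' x, c x * P ε (n + 1) x =
      ∑' y, (c (y - 1) * (1 / 2 - y * ε) + c (y + 1) * (1 / 2 + y * ε)) * P ε n y := by
  calc ∑' x, c x * P ε (n + 1) x
      = ∑' x : ℤ, (c (x + 1 - 1) * (1 / 2 - ((x + 1 : ℤ) : ℝ) * ε) * P ε n (x + 1) +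
          c (x - 1 + 1) * (1 / 2 + ((x - 1 : ℤ) : ℝ) * ε) * P ε n (x - 1)) := by
        refine tsum_congr fun x ↦ ?_
        rw [P]
        push_cast
        ring_nf
    _ = ∑' y, (c (y - 1) * (1 / 2 - y * ε) * P ε n y + c (y + 1) * (1 / 2 + y * ε) * P ε n y) :=
        tsum_comp_add_one_add_comp_sub_one (summable_mul_P ε n fun y ↦ c (y - 1) * (1 / 2 - y * ε))
          (summable_mul_P ε n fun y ↦ c (y + 1) * (1 / 2 + y * ε))
    _ = _ := tsum_congr fun y ↦ by ring

theorem tsum_P (ε : ℝ) (n : ℕ) : ∑' x, P ε n x = 1 := by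
  induction n with
  | zero => exact tsum_ite_eq 0 1
  | succ n ih =>
    calc ∑' x, P ε (n + 1) x = ∑' x, 1 * P ε (n + 1) x := by simp only [one_mul]
      _ = ∑' y, P ε n y := by
        rw [tsum_mul_P_succ]
        exact tsum_congr fun y ↦ by ring
      _ = 1 := ih

theorem m2_zero (ε : ℝ) : m2 ε 0 = 0 := by
  simp [m2, P]

theorem m2_succ (ε : ℝ) (n : ℕ) : m2 ε (n + 1) = (1 + 4 * ε) * m2 ε n + 1 := by
  have h₁ := summable_mul_P ε n fun y ↦ (1 + 4 * ε) * (y : ℝ) ^ 2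
  have h₂ := summable_mul_P ε n fun _ ↦ 1
  calc m2 ε (n + 1)
      = ∑' y : ℤ, ((1 + 4 * ε) * (y : ℝ) ^ 2 * P ε n y + 1 * P ε n y) := by
        rw [m2, tsum_mul_P_succ]
        refine tsum_congr fun y ↦ ?_
        push_cast
        ring
    _ = (1 + 4 * ε) * m2 ε n + 1 := by
        rw [h₁.tsum_add h₂]
        simp only [one_mul, mul_assoc, tsum_mul_left, tsum_P, m2]

theorem m2_eq_geom_sum (ε : ℝ) (n : ℕ) : m2 ε n = ∑ k ∈ Finset.range n, (1 + 4 * ε) ^ k := by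
  induction n with
  | zero => simp [m2_zero]
  | succ n ih => rw [m2_succ, ih, geom_sum_succ]

theorem m2_mul_eq_pow_sub_one (ε : ℝ) (n : ℕ) : m2 ε n * (4 * ε) = (1 + 4 * ε) ^ n - 1 := by
  simpa [m2_eq_geom_sum] using geom_sum_mul (1 + 4 * ε) n

noncomputable def hurstFactor (κ : ℝ) : ℝ :=
  if κ = 0 then 1 else (Real.exp (4 * κ) - 1) / (4 * κ)

theorem tendsto_m2_div_hurstFactor (κ : ℝ) :
    Tendsto (fun N : ℕ ↦ m2 (κ / N) N / N) atTop (nhds (hurstFactor κ)) := by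
  by_cases hκ : κ = 0
  · subst hκ
    refine tendsto_const_nhds.congr' ?_
    filter_upwards [eventually_ne_atTop 0] with N hN
    simp [hurstFactor, m2_eq_geom_sum, hN]
  · rw [hurstFactor, if_neg hκ]
    refine (((Real.tendsto_one_add_div_pow_exp (4 * κ)).sub_const 1).div_const (4 * κ)).congr' ?_
    filter_upwards [eventually_ne_atTop 0] with N hN
    rw [mul_div_assoc, ← m2_mul_eq_pow_sub_one]
    field_simp

theorem abs_exp_sub_one_div_sub_le {x : ℝ} (hx : |x| ≤ 1) (hx₀ : x ≠ 0) :
    |(Real.exp x - 1) / x - (1 + x / 2 + x ^ 2 / 6)| ≤ 5 / 96 * |x| ^ 3 := by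
  have h := Real.exp_bound hx (n := 4) (by norm_num)
  norm_num [Finset.sum_range_succ, Nat.factorial] at h
  have : (Real.exp x - 1) / x - (1 + x / 2 + x ^ 2 / 6) =
      (Real.exp x - (1 + x + x ^ 2 / 2 + x ^ 3 / 6)) / x := by
    field_simp
    ring
  rw [this, abs_div, div_le_iff₀ (abs_pos.mpr hx₀)]
  exact h.trans_eq (by ring)

theorem abs_hurstFactor_sub_le {κ : ℝ} (hκ : |κ| ≤ 1 / 4) :
    |hurstFactor κ - (1 + 2 * κ + 8 / 3 * κ ^ 2)| ≤ 10 / 3 * |κ| ^ 3 := by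
  by_cases hκ₀ : κ = 0
  · simp [hurstFactor, hκ₀]
  have h4κ : |4 * κ| = 4 * |κ| := by rw [abs_mul, abs_of_pos four_pos]
  have h := abs_exp_sub_one_div_sub_le (x := 4 * κ) (by linarith) (by simpa using hκ₀)
  rw [hurstFactor, if_neg hκ₀]
  rw [h4κ] at h
  convert h using 1 <;> ring_nf

/-- convergence of the normalized variance (Hurst factor): for every
`|κ| < 1/2` the limit `H(κ) = lim_{N→∞} m₂(N; κ/N)/N` exists, and there exist
`δ > 0`, `C > 0` with `|H(κ) − (1 + 2κ + (8/3)κ²)| ≤ C·|κ|³` for all `0 < |κ| < δ`. -/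
theorem hurst_factor_convergence :
    ∃ H : ℝ → ℝ,
      (∀ κ : ℝ, |κ| < 1 / 2 →
        Tendsto (fun N : ℕ => m2 (κ / N) N / N) atTop (nhds (H κ))) ∧
      ∃ δ > (0 : ℝ), ∃ C > (0 : ℝ), ∀ κ : ℝ, 0 < |κ| → |κ| < δ →
        |H κ - (1 + 2 * κ + (8 / 3) * κ ^ 2)| ≤ C * |κ| ^ 3 :=
  ⟨hurstFactor, fun κ _ ↦ tendsto_m2_div_hurstFactor κ, 1 / 4, by norm_num, 10 / 3, by norm_num,
    fun _ _ hκ ↦ abs_hurstFactor_sub_le hκ.le⟩
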